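/- arXiv:2004.01259 — 2 statements merged into one kernel-verified Lean document; each statement's English description precedes it below -/
import Mathlib

section
/- Let f be a regulatory Boolean network without positive cycles. Then f has a (unique) fixed point if and only if there exists k ∈ {1,…,n} such that ∅ ≠ I_1(f) ⊊ I_2(f) ⊊ ⋯ ⊊ I_k(f) = [n]. -/
open scoped Classical

abbrev BNState (n : ℕ) := Fin n → Bool

def posArc {n : ℕ} (f : BNState n → BNState n) (u v : Fin n) : Prop :=
  ∃ x : BNState n, x u = false ∧ f x v = false ∧ f (Function.update x u true) v = true

def negArc {n : ℕ} (f : BNState n → BNState n) (u v : Fin n) : Prop :=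
  ∃ x : BNState n, x u = false ∧ f x v = true ∧ f (Function.update x u true) v = false

def arcSign {n : ℕ} (f : BNState n → BNState n) (u v : Fin n) (s : ℤ) : Prop :=
  (s = 1 ∧ posArc f u v) ∨ (s = -1 ∧ negArc f u v)

/-- There is a cycle of positive sign in `G(f)` avoiding the vertex set `P`. -/
def hasPosCycleOutside {n : ℕ} (f : BNState n → BNState n) (P : Set (Fin n)) : Prop :=
  ∃ (m : ℕ) (v : Fin (m+1) → Fin n) (s : Fin (m+1) → ℤ),
    Function.Injective v ∧ (∀ i, v i ∉ P) ∧
    (∀ i, arcSign f (v i) (v (i+1)) (s i)) ∧ (∏ i, s i) = 1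

/-- There is a cycle (of any sign) in `G(f)` avoiding the vertex set `F`. -/
def hasCycleOutside {n : ℕ} (f : BNState n → BNState n) (F : Set (Fin n)) : Prop :=
  ∃ (m : ℕ) (v : Fin (m+1) → Fin n) (s : Fin (m+1) → ℤ),
    Function.Injective v ∧ (∀ i, v i ∉ F) ∧
    (∀ i, arcSign f (v i) (v (i+1)) (s i))

/-- `(IC f k).1` is the set `I_k(f)` of components fixed at iteration `k`,
and `(IC f k).2` records the constant values `c_v` (arbitrary off `I_k(f)`). -/
noncomputable def IC {n : ℕ} (f : BNState n → BNState n) :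
    ℕ → Set (Fin n) × (Fin n → Bool)
  | 0 => (∅, fun _ => false)
  | k+1 =>
    let I := (IC f k).1
    let c := (IC f k).2
    let g : BNState n → BNState n := fun x => f (fun u => if u ∈ I then c u else x u)
    ({v | ∀ x y, g x v = g y v}, fun v => g (fun _ => false) v)

/-- The network `f^{I_k}` obtained from `f` by clamping the components of `I_k(f)`. -/
noncomputable def fI {n : ℕ} (f : BNState n → BNState n) (k : ℕ) :
    BNState n → BNState n :=
  fun x => f (fun u => if u ∈ (IC f k).1 then (IC f k).2 u else x u)

/-- Partial evaluation `f^u`: update only component `u`. -/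
def seqStep {n : ℕ} (f : BNState n → BNState n) (u : Fin n) (x : BNState n) : BNState n :=
  Function.update x u (f x u)

/-- Sequential update `f^π = f^{π_n} ∘ ⋯ ∘ f^{π_1}`. -/
def seqUpdate {n : ℕ} (f : BNState n → BNState n) (π : Equiv.Perm (Fin n))
    (x : BNState n) : BNState n :=
  (List.ofFn (fun i => π i)).foldl (fun y u => seqStep f u y) x

noncomputable def ov {n : ℕ} (f : BNState n → BNState n) (j : ℕ) (x : BNState n) : BNState n :=
  fun u => if u ∈ (IC f j).1 then (IC f j).2 u else x u

lemma fI_eq {n : ℕ} (f : BNState n → BNState n) (j : ℕ) (x : BNState n) :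
    fI f j x = f (ov f j x) := rfl

lemma IC_zero_fst {n : ℕ} (f : BNState n → BNState n) : (IC f 0).1 = ∅ := rfl

lemma mem_IC_succ {n : ℕ} (f : BNState n → BNState n) (j : ℕ) (v : Fin n) :
    v ∈ (IC f (j+1)).1 ↔ ∀ x y, fI f j x v = fI f j y v := Iff.rfl

lemma IC_succ_snd {n : ℕ} (f : BNState n → BNState n) (j : ℕ) (v : Fin n) :
    (IC f (j+1)).2 v = fI f j (fun _ => false) v := rfl

lemma IC_mono {n : ℕ} (f : BNState n → BNState n) :
    ∀ j, ((IC f j).1 ⊆ (IC f (j+1)).1) ∧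
      (∀ v ∈ (IC f j).1, (IC f (j+1)).2 v = (IC f j).2 v) := by
  intro j
  induction j with
  | zero => exact ⟨by simp [IC_zero_fst], by simp [IC_zero_fst]⟩
  | succ j ih =>
    have ovov : ∀ x : BNState n, ov f j (ov f (j+1) x) = ov f (j+1) x := by
      intro x
      funext u
      by_cases hu : u ∈ (IC f j).1
      · show (if u ∈ (IC f j).1 then (IC f j).2 u else ov f (j+1) x u)
            = (if u ∈ (IC f (j+1)).1 then (IC f (j+1)).2 u else x u)
        rw [if_pos hu, if_pos (ih.1 hu)]
        exact (ih.2 u hu).symm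
      · show (if u ∈ (IC f j).1 then (IC f j).2 u else (ov f (j+1) x u)) = ov f (j+1) x u
        rw [if_neg hu]
    have key : ∀ x : BNState n, fI f (j+1) x = fI f j (ov f (j+1) x) := by
      intro x
      rw [fI_eq, fI_eq, ovov]
    constructor
    · intro v hv
      rw [mem_IC_succ] at hv ⊢
      intro x y
      rw [key x, key y]
      exact hv _ _
    · intro v hv
      rw [mem_IC_succ] at hv
      rw [IC_succ_snd, IC_succ_snd, key]
      exact hv _ _

lemma fixed_agree {n : ℕ} (f : BNState n → BNState n) (y : BNState n) (hy : f y = y) :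
    ∀ j, ∀ v ∈ (IC f j).1, y v = (IC f j).2 v := by
  intro j
  induction j with
  | zero => intro v hv; exact absurd hv (by simp [IC_zero_fst])
  | succ j ih =>
    have hov : ov f j y = y := by
      funext u
      show (if u ∈ (IC f j).1 then (IC f j).2 u else y u) = y u
      by_cases hu : u ∈ (IC f j).1
      · rw [if_pos hu]; exact (ih u hu).symm
      · rw [if_neg hu]
    intro v hv
    rw [mem_IC_succ] at hv
    have h1 : fI f j y v = y v := by rw [fI_eq, hov, hy]
    rw [IC_succ_snd, ← hv y (fun _ => false), h1]

lemma fixed_ov {n : ℕ} (f : BNState n → BNState n) (y : BNState n) (hy : f y = y) (j : ℕ) :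
    ov f j y = y := by
  funext u
  show (if u ∈ (IC f j).1 then (IC f j).2 u else y u) = y u
  by_cases hu : u ∈ (IC f j).1
  · rw [if_pos hu]; exact (fixed_agree f y hy j u hu).symm
  · rw [if_neg hu]

lemma exists_flip {n : ℕ} (h : BNState n → BNState n) (v : Fin n) (y : BNState n) :
    ∀ (m : ℕ) (z : BNState n), (Finset.univ.filter fun u => y u ≠ z u).card ≤ m →
      h z v ≠ h y v →
      ∃ u, y u ≠ z u ∧ arcSign h u v (if y u = h y v then 1 else -1) := by
  intro m
  induction m with
  | zero =>
    intro z hcard hne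
    exfalso
    apply hne
    have : z = y := by
      funext u
      by_contra hu
      have : u ∈ Finset.univ.filter fun u => y u ≠ z u := by
        simp [Ne.symm hu]
      have := Finset.card_pos.mpr ⟨u, this⟩
      omega
    rw [this]
  | succ m ih =>
    intro z hcard hne
    have hzy : ∃ u0, y u0 ≠ z u0 := by
      by_contra hall
      push_neg at hall
      exact hne (by rw [show z = y from funext fun u => (hall u).symm])
    obtain ⟨u0, hu0⟩ := hzy
    set z' := Function.update z u0 (y u0) with hz'
    have hz'u0 : z' u0 = y u0 := Function.update_self _ _ _
    by_cases hcase : h z' v = h y v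
    · refine ⟨u0, hu0, ?_⟩
      have hzval : h z v = ! (h y v) := by
        cases hz1 : h z v <;> cases hy1 : h y v <;> simp_all
      cases hyu : y u0 with
      | false =>
        have h1 : z' u0 = false := by rw [hz'u0, hyu]
        have hzu0 : z u0 = true := by
          cases hz2 : z u0
          · exact absurd (by rw [hyu, hz2]) hu0
          · rfl
        have h2 : Function.update z' u0 true = z := by
          funext w
          by_cases hw : w = u0
          · subst hw; simp [hzu0]
          · simp [Function.update_of_ne hw, hz']
        cases hyv : h y v with
        | false =>
          refine Or.inl ⟨by simp, z', h1, ?_, ?_⟩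
          · rw [hcase, hyv]
          · rw [h2, hzval, hyv]; rfl
        | true =>
          refine Or.inr ⟨by simp, z', h1, ?_, ?_⟩
          · rw [hcase, hyv]
          · rw [h2, hzval, hyv]; rfl
      | true =>
        have hzu0 : z u0 = false := by
          cases hz2 : z u0
          · rfl
          · exact absurd (by rw [hyu, hz2]) hu0
        have h2 : Function.update z u0 true = z' := by rw [hz', hyu]
        cases hyv : h y v with
        | false =>
          refine Or.inr ⟨by simp, z, hzu0, ?_, ?_⟩
          · rw [hzval, hyv]; rfl
          · rw [h2, hcase, hyv]
        | true =>
          refine Or.inl ⟨by simp, z, hzu0, ?_, ?_⟩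
          · rw [hzval, hyv]; rfl
          · rw [h2, hcase, hyv]
    · have hcard' : (Finset.univ.filter fun u => y u ≠ z' u).card ≤ m := by
        have hsub : (Finset.univ.filter fun u => y u ≠ z' u) ⊆
            (Finset.univ.filter fun u => y u ≠ z u).erase u0 := by
          intro w hw
          simp only [Finset.mem_filter, Finset.mem_univ, true_and] at hw
          have hwne : w ≠ u0 := by
            intro hww; subst hww; exact hw hz'u0.symm
          rw [Finset.mem_erase]
          refine ⟨hwne, ?_⟩
          simp only [Finset.mem_filter, Finset.mem_univ, true_and]
          rwa [hz', Function.update_of_ne hwne] at hw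
        have hu0mem : u0 ∈ Finset.univ.filter fun u => y u ≠ z u := by simp [hu0]
        have hc1 := Finset.card_le_card hsub
        have hc2 := Finset.card_erase_of_mem hu0mem
        omega
      obtain ⟨u, hu1, hu2⟩ := ih z' hcard' hcase
      refine ⟨u, ?_, hu2⟩
      by_cases hwu : u = u0
      · subst hwu; exact absurd hz'u0.symm hu1
      · rw [show z u = z' u by rw [hz', Function.update_of_ne hwu]]
        exact hu1

lemma arc_lift {n : ℕ} (f : BNState n → BNState n) (j : ℕ) (u v : Fin n)
    (hu : u ∉ (IC f j).1) (s : ℤ) (ha : arcSign (fI f j) u v s) : arcSign f u v s := by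
  have hov_u : ∀ x : BNState n, ov f j x u = x u := fun x => if_neg hu
  have hov_upd : ∀ x : BNState n,
      Function.update (ov f j x) u true = ov f j (Function.update x u true) := by
    intro x
    funext w
    by_cases hw : w = u
    · subst hw
      simp [hov_u]
    · rw [Function.update_of_ne hw]
      show ov f j x w = ov f j (Function.update x u true) w
      unfold ov
      by_cases hwI : w ∈ (IC f j).1
      · rw [if_pos hwI, if_pos hwI]
      · rw [if_neg hwI, if_neg hwI, Function.update_of_ne hw]
  rcases ha with ⟨hs, x, hx0, hxv, hxv'⟩ | ⟨hs, x, hx0, hxv, hxv'⟩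
  · refine Or.inl ⟨hs, ov f j x, by rw [hov_u, hx0], hxv, ?_⟩
    rw [hov_upd]
    exact hxv'
  · refine Or.inr ⟨hs, ov f j x, by rw [hov_u, hx0], hxv, ?_⟩
    rw [hov_upd]
    exact hxv'

lemma prod_sign {m : ℕ} (b : Fin (m+1) → Bool) :
    (∏ i, (if b i = b (i+1) then (1:ℤ) else -1)) = 1 := by
  have h1 : ∀ i : Fin (m+1), (if b i = b (i+1) then (1:ℤ) else -1)
      = (if b i then (1:ℤ) else -1) * (if b (i+1) then (1:ℤ) else -1) := by
    intro i
    cases hb : b i <;> cases hb2 : b (i+1) <;> norm_num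
  calc (∏ i, (if b i = b (i+1) then (1:ℤ) else -1))
      = ∏ i, ((if b i then (1:ℤ) else -1) * (if b (i+1) then (1:ℤ) else -1)) := by
        exact Finset.prod_congr rfl (fun i _ => h1 i)
    _ = (∏ i, (if b i then (1:ℤ) else -1)) * (∏ i, (if b (i+1) then (1:ℤ) else -1)) :=
        Finset.prod_mul_distrib
    _ = (∏ i, (if b i then (1:ℤ) else -1)) * (∏ i, (if b i then (1:ℤ) else -1)) := by
        congr 1
        exact Fintype.prod_equiv (Equiv.addRight (1 : Fin (m+1))) _ _ (fun i => rfl)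
    _ = ∏ i, ((if b i then (1:ℤ) else -1) * (if b i then (1:ℤ) else -1)) :=
        Finset.prod_mul_distrib.symm
    _ = 1 := by
        apply Finset.prod_eq_one
        intro i _
        cases hb : b i <;> norm_num

lemma exists_new {n : ℕ} (f : BNState n → BNState n)
    (hpos : ¬ hasPosCycleOutside f (∅ : Set (Fin n)))
    (y : BNState n) (hy : f y = y) (j : ℕ) (hne : (IC f j).1 ≠ Set.univ) :
    (IC f j).1 ⊂ (IC f (j+1)).1 := by
  have hsub := (IC_mono f j).1
  rw [Set.ssubset_iff_of_subset hsub]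
  by_contra hcon
  push_neg at hcon
  have hyfix : fI f j y = y := by rw [fI_eq, fixed_ov f y hy j, hy]
  have key : ∀ v, v ∉ (IC f j).1 →
      ∃ u, u ∉ (IC f j).1 ∧ arcSign f u v (if y u = y v then 1 else -1) := by
    intro v hv
    have hv1 : v ∉ (IC f (j+1)).1 := fun hmem => hv (hcon v hmem)
    rw [mem_IC_succ] at hv1
    push_neg at hv1
    obtain ⟨x, z, hxz⟩ := hv1
    have hnorm : ∀ w : BNState n,
        fI f j (fun u => if u ∈ (IC f j).1 then y u else w u) = fI f j w := by
      intro w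
      have hov : ov f j (fun u => if u ∈ (IC f j).1 then y u else w u) = ov f j w := by
        funext u
        show (if u ∈ (IC f j).1 then (IC f j).2 u
            else (if u ∈ (IC f j).1 then y u else w u))
            = (if u ∈ (IC f j).1 then (IC f j).2 u else w u)
        by_cases hu : u ∈ (IC f j).1
        · rw [if_pos hu, if_pos hu]
        · rw [if_neg hu, if_neg hu, if_neg hu]
      rw [fI_eq, fI_eq, hov]
    have hw : ∃ w : BNState n, (∀ u ∈ (IC f j).1, w u = y u) ∧ fI f j w v ≠ y v := by
      by_cases hxy : fI f j (fun u => if u ∈ (IC f j).1 then y u else x u) v = y v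
      · refine ⟨(fun u => if u ∈ (IC f j).1 then y u else z u), fun u hu => if_pos hu, ?_⟩
        rw [hnorm z]
        intro hc
        apply hxz
        rw [hc, ← hxy, hnorm x]
      · exact ⟨(fun u => if u ∈ (IC f j).1 then y u else x u), fun u hu => if_pos hu, hxy⟩
    obtain ⟨w, hwI, hwv⟩ := hw
    have hwv' : fI f j w v ≠ fI f j y v := by rw [hyfix]; exact hwv
    obtain ⟨u, huw, harc⟩ := exists_flip (fI f j) v y _ w le_rfl hwv'
    have hu : u ∉ (IC f j).1 := fun humem => huw (hwI u humem).symm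
    rw [hyfix] at harc
    exact ⟨u, hu, arc_lift f j u v hu _ harc⟩
  have key' : ∀ v : Fin n, ∃ u, v ∉ (IC f j).1 →
      (u ∉ (IC f j).1 ∧ arcSign f u v (if y u = y v then 1 else -1)) := by
    intro v
    by_cases hv : v ∈ (IC f j).1
    · exact ⟨v, fun hc => absurd hv hc⟩
    · obtain ⟨u, h1, h2⟩ := key v hv
      exact ⟨u, fun _ => ⟨h1, h2⟩⟩
  choose N hN using key'
  obtain ⟨v0, hv0⟩ := Set.ne_univ_iff_exists_notMem _ |>.mp hne
  have hiter : ∀ i, N^[i] v0 ∉ (IC f j).1 := by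
    intro i
    induction i with
    | zero => exact hv0
    | succ i ih =>
      rw [Function.iterate_succ_apply']
      exact (hN _ ih).1
  -- pigeonhole: two iterates coincide
  obtain ⟨a', b', hab', heq'⟩ := Fintype.exists_ne_map_eq_of_card_lt
    (fun i : Fin (n+1) => N^[(i:ℕ)] v0) (by simp)
  have hab2 : ∃ a b : ℕ, a < b ∧ N^[a] v0 = N^[b] v0 := by
    rcases lt_or_gt_of_ne hab' with hlt | hgt
    · exact ⟨a', b', hlt, heq'⟩
    · exact ⟨b', a', hgt, heq'.symm⟩
  obtain ⟨a, b, hab, heq⟩ := hab2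
  have hex : ∃ p, 0 < p ∧ N^[p] (N^[a] v0) = N^[a] v0 := by
    refine ⟨b - a, by omega, ?_⟩
    rw [← Function.iterate_add_apply, show b - a + a = b by omega]
    exact heq.symm
  set w := N^[a] v0 with hwdef
  set P := Nat.find hex with hPdef
  obtain ⟨hP0, hPw⟩ := Nat.find_spec hex
  have hmin : ∀ q, q < P → ¬(0 < q ∧ N^[q] w = w) := fun q hq => Nat.find_min hex hq
  have hinj : ∀ c d : ℕ, c < P → d < P → N^[c] w = N^[d] w → c = d := by
    have haux : ∀ c d : ℕ, c < d → d < P → N^[c] w = N^[d] w → False := by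
      intro c d hcd hdP hE
      apply hmin (P - d + c) (by omega)
      refine ⟨by omega, ?_⟩
      calc N^[P - d + c] w = N^[P - d] (N^[c] w) := Function.iterate_add_apply _ _ _ _
        _ = N^[P - d] (N^[d] w) := by rw [hE]
        _ = N^[P - d + d] w := (Function.iterate_add_apply _ _ _ _).symm
        _ = w := by rw [show P - d + d = P by omega]; exact hPw
    intro c d hc hd hE
    rcases lt_trichotomy c d with h | h | h
    · exact absurd hE (fun hE => haux c d h hd hE)
    · exact h
    · exact absurd hE.symm (fun hE => haux d c h hc hE)
  set m := P - 1 with hmdef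
  have hPm : P = m + 1 := by omega
  set V : Fin (m+1) → Fin n := fun i => N^[m - (i:ℕ)] w with hVdef
  have hstep : ∀ i : Fin (m+1), N (V (i+1)) = V i := by
    intro i
    have hval := Fin.val_add_one i
    by_cases hlast : i = Fin.last m
    · rw [if_pos hlast] at hval
      show N (N^[m - ((i+1 : Fin (m+1)):ℕ)] w) = N^[m - (i:ℕ)] w
      rw [hval, hlast]
      show N (N^[m - 0] w) = N^[m - m] w
      rw [Nat.sub_zero, Nat.sub_self, ← Function.iterate_succ_apply' N m w]
      show N^[m+1] w = N^[0] w
      have hh : N^[m+1] w = w := by rw [← hPm, hPdef]; exact hPw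
      rw [hh]
      simp
    · rw [if_neg hlast] at hval
      have hilt : (i:ℕ) < m := by
        have := Fin.val_lt_last hlast
        simpa using this
      show N (N^[m - ((i+1 : Fin (m+1)):ℕ)] w) = N^[m - (i:ℕ)] w
      rw [hval, ← Function.iterate_succ_apply' N (m - ((i:ℕ)+1)) w]
      congr 1
      omega
  have hVnot : ∀ i, V i ∉ (IC f j).1 := by
    intro i
    show N^[m - (i:ℕ)] w ∉ (IC f j).1
    rw [hwdef, ← Function.iterate_add_apply]
    exact hiter _
  have hVinj : Function.Injective V := by
    intro i i' hE
    have h1 : m - (i:ℕ) = m - (i':ℕ) :=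
      hinj _ _ (by omega) (by omega) hE
    have h2 : (i:ℕ) ≤ m := by omega
    have h3 : (i':ℕ) ≤ m := by omega
    apply Fin.ext
    omega
  apply hpos
  refine ⟨m, V, fun i => if y (V i) = y (V (i+1)) then 1 else -1, hVinj,
    fun i => Set.notMem_empty _, ?_, prod_sign (fun i => y (V i))⟩
  intro i
  have := (hN (V (i+1)) (hVnot (i+1))).2
  rw [hstep i] at this
  exact this

/-- A regulatory BN without positive cycles has a (unique) fixed point iff
`∅ ≠ I_1(f) ⊊ I_2(f) ⊊ ⋯ ⊊ I_k(f) = [n]` for some `k ∈ {1,…,n}`. -/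
theorem fixedPoint_iff_Iset_chain {n : ℕ} (hn : 1 ≤ n) (f : BNState n → BNState n)
    (hreg : ∀ u v : Fin n, ¬ (posArc f u v ∧ negArc f u v))
    (hpos : ¬ hasPosCycleOutside f (∅ : Set (Fin n))) :
    (∃ y : BNState n, f y = y) ↔
      ∃ k : ℕ, 1 ≤ k ∧ k ≤ n ∧ (IC f 1).1 ≠ ∅ ∧
        (∀ j : ℕ, 1 ≤ j → j < k → (IC f j).1 ⊂ (IC f (j+1)).1) ∧
        (IC f k).1 = Set.univ := by
  haveI : Nonempty (Fin n) := ⟨⟨0, hn⟩⟩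
  constructor
  · rintro ⟨y, hy⟩
    have hstrict : ∀ j, (IC f j).1 ≠ Set.univ → (IC f j).1 ⊂ (IC f (j+1)).1 :=
      fun j => exists_new f hpos y hy j
    have hmonou : ∀ j, (IC f j).1 = Set.univ → (IC f (j+1)).1 = Set.univ := by
      intro j hj
      apply Set.eq_univ_of_univ_subset
      rw [← hj]
      exact (IC_mono f j).1
    have hcard : ∀ j, (IC f j).1 = Set.univ ∨ j ≤ (IC f j).1.ncard := by
      intro j
      induction j with
      | zero => exact Or.inr (Nat.zero_le _)
      | succ j ih =>
        by_cases hu : (IC f j).1 = Set.univ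
        · exact Or.inl (hmonou j hu)
        · rcases ih with h | h
          · exact absurd h hu
          · right
            have hss := hstrict j hu
            have := Set.ncard_lt_ncard hss (Set.toFinite _)
            omega
    have hunivn : (IC f n).1 = Set.univ := by
      rcases hcard n with h | h
      · exact h
      · apply Set.eq_of_subset_of_ncard_le (Set.subset_univ _) ?_ (Set.toFinite _)
        rw [Set.ncard_univ]
        simpa using h
    have hexu : ∃ k, (IC f k).1 = Set.univ := ⟨n, hunivn⟩
    have hkspec : (IC f (Nat.find hexu)).1 = Set.univ := Nat.find_spec hexu
    have hkmin : ∀ j, j < Nat.find hexu → (IC f j).1 ≠ Set.univ :=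
      fun j hj => Nat.find_min hexu hj
    have hk1 : 1 ≤ Nat.find hexu := by
      rcases Nat.eq_zero_or_pos (Nat.find hexu) with h0 | h0
      · exfalso
        have h2 := hkspec
        rw [h0] at h2
        exact Set.empty_ne_univ ((IC_zero_fst f) ▸ h2)
      · exact h0
    have hkn : Nat.find hexu ≤ n := Nat.find_le hunivn
    have hI1 : (IC f 1).1 ≠ ∅ := by
      intro hemp
      have h01 := hstrict 0 (by rw [IC_zero_fst f]; exact Set.empty_ne_univ)
      rw [IC_zero_fst f, hemp] at h01
      exact h01.ne rfl
    exact ⟨Nat.find hexu, hk1, hkn, hI1,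
      fun j _ hj => hstrict j (hkmin j hj), hkspec⟩
  · rintro ⟨k, hk1, hkn, hI1, hchain, huniv⟩
    obtain ⟨k', rfl⟩ : ∃ k', k = k' + 1 := ⟨k - 1, by omega⟩
    refine ⟨(IC f (k'+1)).2, ?_⟩
    funext v
    have hv : v ∈ (IC f (k'+1)).1 := by rw [huniv]; trivial
    have hov : ov f k' ((IC f (k'+1)).2) = (IC f (k'+1)).2 := by
      funext u
      show (if u ∈ (IC f k').1 then (IC f k').2 u else (IC f (k'+1)).2 u)
          = (IC f (k'+1)).2 u
      by_cases hu : u ∈ (IC f k').1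
      · rw [if_pos hu]
        exact ((IC_mono f k').2 u hu).symm
      · rw [if_neg hu]
    rw [mem_IC_succ] at hv
    calc f ((IC f (k'+1)).2) v = fI f k' ((IC f (k'+1)).2) v := by rw [fI_eq, hov]
      _ = fI f k' (fun _ => false) v := hv _ _
      _ = (IC f (k'+1)).2 v := (IC_succ_snd f k' v).symm
end

section
/- Let f be a Boolean network without positive cycles. Then f has a fixed point if and only if f^⟨n⟩(x₀) = f^⟨n+1⟩(x₀), where x₀ = (0,…,0). Hence the existence of a fixed point can be decided by n+1 applications of f to any single initial state. -/
/-!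
Let `y` be a fixed point. If `f x` differs from `y = f y` at `v`, then some `u` with `x u ≠ y u`
has an arc `u → v` in `G(f)`, and this arc is positive exactly when `y u = y v`. Starting from a
coordinate where `f^[n] x` and `y` differ and going back in time gives a walk of length `n` in
`G(f)`, hence a cycle. Its sign is the product of the signs of `y u = y v` along it, which
telescopes to `1`. So without positive cycles `f^[n] x = y` for every `x`, and `f^[n] 0` is a
fixed point exactly when `f^[n] 0 = f^[n+1] 0`.
-/

open scoped Classical

def boolSign : Bool → ℤ
  | false => -1
  | true => 1

@[simp] lemma boolSign_not (b : Bool) : boolSign (!b) = -boolSign b := by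
  cases b <;> rfl

@[simp] lemma boolSign_mul_self (b : Bool) : boolSign b * boolSign b = 1 := by
  cases b <;> rfl

lemma prod_boolSign_mul_boolSign_succ {m : ℕ} (b : Fin (m + 1) → Bool) :
    ∏ i, boolSign (b i) * boolSign (b (i + 1)) = 1 := by
  rw [Finset.prod_mul_distrib,
    Fintype.prod_equiv (Equiv.addRight 1) (fun i => boolSign (b (i + 1))) (fun i => boolSign (b i))
      (fun _ => rfl), ← Finset.prod_mul_distrib]
  simp

lemma exists_walk_of_forall_exists_pred {α : Type*} (R : α → α → Prop) (S : ℕ → α → Prop)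
    (hS : ∀ t v, S (t + 1) v → ∃ u, S t u ∧ R u v) :
    ∀ N v, S N v → ∃ c : ℕ → α, c N = v ∧ ∀ j < N, R (c j) (c (j + 1)) := by
  intro N
  induction N with
  | zero => exact fun v _ => ⟨fun _ => v, rfl, by simp⟩
  | succ N ih =>
    intro v hv
    obtain ⟨u, hu, huv⟩ := hS N v hv
    obtain ⟨c, hcN, hc⟩ := ih u hu
    refine ⟨Function.update c (N + 1) v, by simp, fun j hj => ?_⟩
    rcases Nat.lt_succ_iff_lt_or_eq.mp hj with hj | rfl
    · simpa [Function.update_of_ne (show j ≠ N + 1 by omega),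
        Function.update_of_ne (show j + 1 ≠ N + 1 by omega)] using hc j hj
    · simpa [hcN] using huv

lemma exists_cycle_of_walk {α : Type*} [Fintype α] (R : α → α → Prop) (N : ℕ)
    (hN : Fintype.card α ≤ N) (c : ℕ → α) (hc : ∀ j < N, R (c j) (c (j + 1))) :
    ∃ (m : ℕ) (w : Fin (m + 1) → α), Function.Injective w ∧ ∀ i, R (w i) (w (i + 1)) := by
  -- the first index at which the walk revisits a vertex closes a cycle
  have hrep : ∃ j, j ≤ N ∧ ∃ i < j, c i = c j := by
    obtain ⟨i, j, hij, hcij⟩ :=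
      Fintype.exists_ne_map_eq_of_card_lt (fun i : Fin (N + 1) => c i) (by simpa using hN)
    rcases Fin.lt_or_lt_of_ne hij with h | h
    · exact ⟨j, Nat.lt_succ_iff.mp j.isLt, i, h, hcij⟩
    · exact ⟨i, Nat.lt_succ_iff.mp i.isLt, j, h, hcij.symm⟩
  obtain ⟨hjN, i, hij, hcij⟩ := Nat.find_spec hrep
  set j := Nat.find hrep
  have hinj : ∀ a b, a < j → b < j → c a = c b → a = b := by
    intro a b ha hb hab
    by_contra hne
    rcases Nat.lt_or_gt_of_ne hne with h | h
    · exact Nat.find_min hrep hb ⟨by omega, a, h, hab⟩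
    · exact Nat.find_min hrep ha ⟨by omega, b, h, hab.symm⟩
  refine ⟨j - i - 1, fun k => c (i + k), fun k l hkl => Fin.ext ?_, fun k => ?_⟩
  · have := hinj _ _ (by omega) (by omega) hkl
    omega
  · have hnext : c (i + ↑(k + 1)) = c (i + k + 1) := by
      rcases Fin.eq_castSucc_or_eq_last k with ⟨k, rfl⟩ | rfl
      · simp [add_assoc]
      · simp only [Fin.last_add_one, Fin.val_zero, Fin.val_last, add_zero, hcij]
        congr 1
        omega
    simp only [hnext]
    exact hc _ (by omega)

section Arcs

variable {n : ℕ} {f : BNState n → BNState n}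

lemma arcSign_of_apply_update_true_ne {x : BNState n} {u v : Fin n} (hu : x u = false)
    (h : f x v ≠ f (Function.update x u true) v) : arcSign f u v (-boolSign (f x v)) := by
  cases hf : f x v
  · exact Or.inl ⟨rfl, x, hu, hf, by simpa [hf] using h.symm⟩
  · exact Or.inr ⟨rfl, x, hu, hf, by simpa [hf] using h.symm⟩

lemma arcSign_of_apply_flip_ne {z : BNState n} {u v : Fin n}
    (h : f z v ≠ f (Function.update z u (!z u)) v) :
    arcSign f u v (boolSign (z u) * boolSign (f z v)) := by
  cases hz : z u
  · rw [hz] at h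
    simpa [boolSign] using arcSign_of_apply_update_true_ne hz h
  · set x := Function.update z u false
    have hxz : Function.update x u true = z := by
      rw [Function.update_idem, ← hz, Function.update_eq_self]
    rw [hz] at h
    have hfx : f x v = !f z v := Bool.eq_not_iff.mpr h.symm
    have harc := arcSign_of_apply_update_true_ne (f := f) (v := v)
      (Function.update_self u false z) (by rwa [hxz, ne_comm])
    convert harc using 2
    rw [hfx, boolSign_not, neg_neg]
    exact one_mul _

-- Move from `a` to `b` one coordinate at a time; the value at `v` changes at some flip.
lemma exists_arcSign_of_apply_ne {a b : BNState n} {v : Fin n} (h : f a v ≠ f b v) :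
    ∃ u, a u ≠ b u ∧ arcSign f u v (boolSign (a u) * boolSign (f a v)) := by
  suffices ∀ (s : Finset (Fin n)) (a : BNState n), (∀ u ∉ s, a u = b u) → f a v ≠ f b v →
      ∃ u, a u ≠ b u ∧ arcSign f u v (boolSign (a u) * boolSign (f a v)) from
    this Finset.univ a (by simp) h
  intro s
  induction s using Finset.induction_on with
  | empty => exact fun a hab h => absurd (congrArg (f · v) (funext fun u => hab u (by simp))) h
  | insert w s _ ih =>
    intro a hab h
    set a' := Function.update a w (b w)
    by_cases hflip : f a v = f a' v
    · have ha'b : ∀ u ∉ s, a' u = b u := by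
        intro u hu
        by_cases huw : u = w
        · simp [a', huw]
        · simpa [a', huw] using hab u (by simp [huw, hu])
      obtain ⟨u, hu, harc⟩ := ih a' ha'b (hflip ▸ h)
      have huw : u ≠ w := by rintro rfl; simp [a'] at hu
      simp only [a', Function.update_of_ne huw] at hu harc
      exact ⟨u, hu, hflip ▸ harc⟩
    · have hw : a w ≠ b w := by rintro hw; simp [a', ← hw] at hflip
      have hbw : b w = !a w := Bool.eq_not_iff.mpr hw.symm
      exact ⟨w, hw, arcSign_of_apply_flip_ne (by rwa [← hbw])⟩

end Arcs

section FixedPoint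

variable {n : ℕ} {f : BNState n → BNState n} {y : BNState n}

lemma exists_arcSign_of_apply_ne_of_isFixedPt (hy : Function.IsFixedPt f y) {x : BNState n}
    {v : Fin n} (h : f x v ≠ y v) :
    ∃ u, x u ≠ y u ∧ arcSign f u v (boolSign (y u) * boolSign (y v)) := by
  obtain ⟨u, hu, harc⟩ := exists_arcSign_of_apply_ne (f := f) (a := x) (b := y) (v := v)
    (by rwa [hy.eq])
  rw [Bool.eq_not_iff.mpr hu, Bool.eq_not_iff.mpr h, boolSign_not, boolSign_not,
    neg_mul_neg] at harc
  exact ⟨u, hu, harc⟩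

theorem iterate_eq_of_isFixedPt (hpos : ¬ hasPosCycleOutside f ∅)
    (hy : Function.IsFixedPt f y) (x : BNState n) : f^[n] x = y := by
  by_contra hne
  obtain ⟨v, hv⟩ := Function.ne_iff.mp hne
  let R u v := arcSign f u v (boolSign (y u) * boolSign (y v))
  obtain ⟨c, -, hc⟩ := exists_walk_of_forall_exists_pred R (fun t v => f^[t] x v ≠ y v)
    (fun t v h => exists_arcSign_of_apply_ne_of_isFixedPt hy
      (by rwa [← Function.iterate_succ_apply' f t x]))
    n v hv
  obtain ⟨m, w, hw, harc⟩ := exists_cycle_of_walk R n (by simp) c hc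
  exact hpos ⟨m, w, _, hw, fun _ => Set.notMem_empty _, harc,
    prod_boolSign_mul_boolSign_succ (y ∘ w)⟩

end FixedPoint

/-- A BN without positive cycles has a fixed point iff
`f^⟨n⟩(0) = f^⟨n+1⟩(0)` where `0 = (0,…,0)`. -/
theorem fixedPoint_iff_iterate_zero {n : ℕ} (f : BNState n → BNState n)
    (hpos : ¬ hasPosCycleOutside f (∅ : Set (Fin n))) :
    (∃ y : BNState n, f y = y) ↔
      f^[n] (fun _ => false) = f^[n+1] (fun _ => false) := by
  constructor
  · rintro ⟨y, hy⟩
    rw [Function.iterate_succ_apply', iterate_eq_of_isFixedPt hpos hy, hy]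
  · intro h
    exact ⟨_, (Function.iterate_succ_apply' f n _).symm.trans h.symm⟩
end
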